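/- arXiv:math/0612606 — 2 statements merged into one kernel-verified Lean document; each statement's English description precedes it below -/
import Mathlib

section
/- For every x ∈ E, the Fejér (Cesàro) means of the partial sums converge to x in E: lim_{k→∞} ‖ Σ_{p=0}^{k} (1/(k+1)) (Σ_{n=−p}^{p} x(n) e_n) − x ‖ = 0; equivalently, lim_{k→∞} ‖ Σ_{n=−k}^{k} (1 − |n|/(k+1)) x(n) e_n − x ‖ = 0. -/
open Filter Finset Topology

/-!
For `x` in the span of the `e n`, take `N` larger than `k` plus the radius of the support of `x`
and a primitive `N`-th root of unity `ζ`. The Fejér kernel `F_k(z) = |∑_{a ≤ k} z^a|² / (k+1)` is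
nonnegative, and its discrete averages `(1/N) ∑_j F_k(ζ^j) ζ^{jn}` are exactly the Fejér
coefficients `(1 - |n|/(k+1))⁺` as long as `|n| + k < N`. Hence the `k`-th Fejér mean of `x` is
the convex combination `∑_j (F_k(ζ^j)/N) Ψ_{ζ^j} x`, of norm at most `C ‖x‖`. By density this
bound holds on all of `E`; the means converge on each `e m`, and the uniform bound makes the
family equicontinuous, which carries the convergence from the span to its closure `E`.
-/

theorem IsPrimitiveRoot.sum_pow_zpow {K : Type*} [Field K] {ζ : K} {N : ℕ}
    (hζ : IsPrimitiveRoot ζ N) (t : ℤ) :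
    ∑ j ∈ range N, (ζ ^ j) ^ t = if (N : ℤ) ∣ t then (N : K) else 0 := by
  have hcomm (j : ℕ) : (ζ ^ j) ^ t = (ζ ^ t) ^ j := by
    rw [← zpow_natCast, ← zpow_mul, mul_comm, zpow_mul, zpow_natCast]
  simp only [hcomm]
  split_ifs with h
  · simp [(hζ.zpow_eq_one_iff_dvd t).mpr h]
  · have hpow : (ζ ^ t) ^ N = 1 := by
      rw [← zpow_natCast, ← zpow_mul, mul_comm, zpow_mul, zpow_natCast, hζ.pow_eq_one, one_zpow]
    rw [geom_sum_eq (mt (hζ.zpow_eq_one_iff_dvd t).mp h), hpow, sub_self, zero_div]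

theorem Complex.ofReal_sq_norm_sum_zpow {z : ℂ} (hz : ‖z‖ = 1) (s : Finset ℤ) :
    ((‖∑ a ∈ s, z ^ a‖ ^ 2 : ℝ) : ℂ) = ∑ a ∈ s, ∑ b ∈ s, z ^ (a - b) := by
  have hz0 : z ≠ 0 := norm_ne_zero_iff.mp (hz ▸ one_ne_zero)
  have hsplit (a b : ℤ) : z ^ (a - b) = z ^ a * (starRingEnd ℂ) (z ^ b) := by
    rw [zpow_sub₀ hz0, div_eq_mul_inv, Complex.inv_eq_conj (by rw [norm_zpow, hz, one_zpow])]
  simp only [hsplit, ← Finset.sum_mul_sum, ← map_sum, Complex.mul_conj', Complex.ofReal_pow]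

theorem sum_Icc_Icc_ite_sub_add_eq_zero {R : Type*} [AddCommMonoidWithOne R] (k : ℕ) (n : ℤ) :
    ∑ a ∈ Icc (0 : ℤ) k, ∑ b ∈ Icc (0 : ℤ) k, (if a - b + n = 0 then (1 : R) else 0)
      = ((k + 1 - |n|).toNat : R) := by
  have hinner (a : ℤ) : ∑ b ∈ Icc (0 : ℤ) k, (if a - b + n = 0 then (1 : R) else 0)
      = if a + n ∈ Icc (0 : ℤ) k then 1 else 0 := by
    rw [← sum_ite_eq (Icc (0 : ℤ) k) (a + n) fun _ => (1 : R)]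
    exact sum_congr rfl fun b _ => by simp only [show a - b + n = 0 ↔ a + n = b by omega]
  have hfilter :
      {a ∈ Icc (0 : ℤ) k | a + n ∈ Icc (0 : ℤ) k} = Icc (max 0 (-n)) (min k (k - n)) := by
    ext a; simp only [mem_filter, mem_Icc, max_le_iff, le_min_iff]; omega
  rw [sum_congr rfl fun a _ => hinner a, ← sum_filter, hfilter, sum_const, Int.card_Icc,
    nsmul_one]
  congr 2
  rcases abs_cases n with ⟨h, _⟩ | ⟨h, _⟩ <;> rw [h] <;> omega

noncomputable def fejerKernel (k : ℕ) (z : ℂ) : ℝ := ‖∑ a ∈ Icc (0 : ℤ) k, z ^ a‖ ^ 2 / (k + 1)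

theorem fejerKernel_nonneg (k : ℕ) (z : ℂ) : 0 ≤ fejerKernel k z := by
  unfold fejerKernel; positivity

noncomputable def fejerCoeff (k : ℕ) (n : ℤ) : ℝ := (k + 1 - |n|).toNat / (k + 1)

theorem fejerCoeff_of_abs_le {k : ℕ} {n : ℤ} (h : |n| ≤ k) :
    fejerCoeff k n = 1 - ((|n| : ℤ) : ℝ) / (k + 1) := by
  have hcount : ((k + 1 - |n|).toNat : ℤ) = k + 1 - |n| := Int.toNat_of_nonneg (by omega)
  rw [fejerCoeff, ← Int.cast_natCast, hcount]
  push_cast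
  field_simp

theorem fejerCoeff_of_lt_abs {k : ℕ} {n : ℤ} (h : k < |n|) : fejerCoeff k n = 0 := by
  rw [fejerCoeff, Int.toNat_eq_zero.mpr (by omega), Nat.cast_zero, zero_div]

theorem sum_fejerKernel_mul_zpow {ζ : ℂ} {N k : ℕ} (hζ : IsPrimitiveRoot ζ N) {n : ℤ}
    (hn : |n| + k < N) :
    ∑ j ∈ range N, ((fejerKernel k (ζ ^ j) / N : ℝ) : ℂ) * (ζ ^ j) ^ n = fejerCoeff k n := by
  have hN : N ≠ 0 := by have := abs_nonneg n; omega
  have hζ0 : ζ ≠ 0 := hζ.ne_zero hN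
  have hexpand (j : ℕ) : ((fejerKernel k (ζ ^ j) / N : ℝ) : ℂ) * (ζ ^ j) ^ n
      = ((N : ℂ) * (k + 1))⁻¹ *
          ∑ a ∈ Icc (0 : ℤ) k, ∑ b ∈ Icc (0 : ℤ) k, (ζ ^ j) ^ (a - b + n) := by
    have hnorm : ‖ζ ^ j‖ = 1 := by rw [norm_pow, hζ.norm'_eq_one hN, one_pow]
    rw [fejerKernel, Complex.ofReal_div, Complex.ofReal_div, Complex.ofReal_sq_norm_sum_zpow hnorm]
    simp only [zpow_add₀ (pow_ne_zero j hζ0), div_eq_mul_inv, sum_mul, mul_sum]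
    exact sum_congr rfl fun a _ => sum_congr rfl fun b _ => by push_cast; rw [mul_inv]; ring
  have hroots (a : ℤ) (ha : a ∈ Icc (0 : ℤ) k) (b : ℤ) (hb : b ∈ Icc (0 : ℤ) k) :
      ∑ j ∈ range N, (ζ ^ j) ^ (a - b + n) = N * if a - b + n = 0 then 1 else 0 := by
    rw [hζ.sum_pow_zpow, mul_ite, mul_one, mul_zero]
    refine if_congr ⟨fun h => Int.eq_zero_of_abs_lt_dvd h ?_, fun h => h ▸ dvd_zero _⟩ rfl rfl
    rw [mem_Icc] at ha hb
    rcases abs_cases n with ⟨h, _⟩ | ⟨h, _⟩ <;> rw [abs_lt] <;> omega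
  rw [sum_congr rfl fun j _ => hexpand j, ← mul_sum, sum_comm, sum_congr rfl fun a _ => sum_comm,
    sum_congr rfl fun a ha => sum_congr rfl fun b hb => hroots a ha b hb]
  simp only [← mul_sum, sum_Icc_Icc_ite_sub_add_eq_zero, fejerCoeff]
  push_cast
  field_simp

theorem tendsto_fejerCoeff (n : ℤ) : Tendsto (fejerCoeff · n) atTop (𝓝 1) := by
  have h := (tendsto_one_div_add_atTop_nhds_zero_nat.const_mul ((|n| : ℤ) : ℝ)).const_sub 1
  rw [mul_zero, sub_zero] at h
  refine h.congr' ?_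
  filter_upwards [eventually_ge_atTop |n|.toNat] with k hk
  rw [fejerCoeff_of_abs_le (by omega), mul_one_div]

theorem exists_apply_eq_zero_of_mem_span {R M : Type*} [Semiring R] [AddCommMonoid M]
    [Module R M] {ι : M →ₗ[R] (ℤ → R)} {e : ℤ → M} (he : ∀ k, ι (e k) = Pi.single k 1) {x : M}
    (hx : x ∈ Submodule.span R (Set.range e)) : ∃ B : ℤ, ∀ n, B < |n| → ι x n = 0 := by
  induction hx using Submodule.span_induction with
  | mem _ h =>
    obtain ⟨m, rfl⟩ := h
    exact ⟨|m|, fun n hn => by rw [he, Pi.single_eq_of_ne (by rintro rfl; exact hn.false)]⟩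
  | zero => exact ⟨0, fun n _ => by simp⟩
  | add x y _ _ hx hy =>
    obtain ⟨B, hB⟩ := hx
    obtain ⟨B', hB'⟩ := hy
    refine ⟨max B B', fun n hn => ?_⟩
    rw [max_lt_iff] at hn
    simp [hB n hn.1, hB' n hn.2]
  | smul c x _ hx =>
    obtain ⟨B, hB⟩ := hx
    exact ⟨B, fun n hn => by simp [hB n hn]⟩

theorem ContinuousLinearMap.tendsto_apply_of_dense_span {𝕜 E F ι : Type*}
    [NontriviallyNormedField 𝕜] [SeminormedAddCommGroup E] [NormedSpace 𝕜 E]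
    [SeminormedAddCommGroup F] [NormedSpace 𝕜 F] {l : Filter ι} (T : ι → E →L[𝕜] F)
    (S : E →L[𝕜] F) {C : ℝ} (hT : ∀ i x, ‖T i x‖ ≤ C * ‖x‖) {s : Set E}
    (hs : Dense (Submodule.span 𝕜 s : Set E)) (h : ∀ y ∈ s, Tendsto (T · y) l (𝓝 (S y)))
    (x : E) : Tendsto (T · x) l (𝓝 (S x)) := by
  let V : Submodule 𝕜 E :=
    { carrier := {y | Tendsto (T · y) l (𝓝 (S y))}
      add_mem' := fun hy hy' => by simpa using hy.add hy'
      zero_mem' := by simpa using tendsto_const_nhds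
      smul_mem' := fun c y hy => by simpa using hy.const_smul c }
  have hequi : Equicontinuous ((↑) ∘ T : ι → E → F) :=
    ((NormedSpace.equicontinuous_TFAE T).out 3 1).mp (Exists.intro C hT)
  exact hs.induction (fun y hy => (Submodule.span_le (p := V)).mpr h hy)
    (hequi.isClosed_setOfPred_tendsto S.continuous) x

section SequenceSpace

variable {E : Type*} [NormedAddCommGroup E] [NormedSpace ℂ E] {ι : E →ₗ[ℂ] (ℤ → ℂ)}
  (hcoord : ∀ n, Continuous fun x => ι x n) (e : ℤ → E)

noncomputable def fejerMean (k : ℕ) : E →L[ℂ] E :=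
  ∑ n ∈ Icc (-(k : ℤ)) k, ((1 - ((|n| : ℤ) : ℝ) / (k + 1) : ℝ) : ℂ) •
    ContinuousLinearMap.smulRight (⟨LinearMap.proj n ∘ₗ ι, hcoord n⟩ : E →L[ℂ] ℂ) (e n)

theorem fejerMean_apply (k : ℕ) (x : E) :
    fejerMean hcoord e k x = ∑ n ∈ Icc (-(k : ℤ)) k,
      (((1 - ((|n| : ℤ) : ℝ) / (k + 1) : ℝ) : ℂ) * ι x n) • e n := by
  simp only [fejerMean, _root_.sum_apply, smul_apply, ContinuousLinearMap.smulRight_apply,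
    smul_smul]
  rfl

variable {e}

theorem coord_fejerMean_apply (he : ∀ k, ι (e k) = Pi.single k 1) (k : ℕ) (x : E) (n : ℤ) :
    ι (fejerMean hcoord e k x) n = fejerCoeff k n * ι x n := by
  simp only [fejerMean_apply, map_sum, map_smul, he, Finset.sum_apply, Pi.smul_apply,
    Pi.single_apply, smul_eq_mul, mul_ite, mul_one, mul_zero, sum_ite_eq, mem_Icc]
  split_ifs with h
  · rw [fejerCoeff_of_abs_le (abs_le.mpr h)]
  · rw [fejerCoeff_of_lt_abs (by rw [lt_abs]; omega), Complex.ofReal_zero, zero_mul]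

theorem fejerMean_apply_basis (he : ∀ k, ι (e k) = Pi.single k 1) (k : ℕ) (m : ℤ) :
    fejerMean hcoord e k (e m) = (fejerCoeff k m : ℂ) • e m := by
  simp only [fejerMean_apply, he, Pi.single_apply, mul_ite, mul_one, mul_zero, ite_smul,
    zero_smul, sum_ite_eq', mem_Icc]
  split_ifs with h
  · rw [fejerCoeff_of_abs_le (abs_le.mpr h)]
  · rw [fejerCoeff_of_lt_abs (by rw [lt_abs]; omega), Complex.ofReal_zero, zero_smul]

theorem norm_fejerMean_apply_le_of_mem_span (hι : Function.Injective ι)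
    (he : ∀ k, ι (e k) = Pi.single k 1) {Ψ : ℂ → E → E}
    (hΨ : ∀ z : ℂ, ‖z‖ = 1 → ∀ x : E, ∀ n : ℤ, ι (Ψ z x) n = ι x n * z ^ n) {C : ℝ}
    (hC : ∀ z : ℂ, ‖z‖ = 1 → ∀ x : E, ‖Ψ z x‖ ≤ C * ‖x‖) (k : ℕ) {x : E}
    (hx : x ∈ Submodule.span ℂ (Set.range e)) :
    ‖fejerMean hcoord e k x‖ ≤ C * ‖x‖ := by
  obtain ⟨B, hB⟩ := exists_apply_eq_zero_of_mem_span he hx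
  set N := B.toNat + k + 1
  have hN : N ≠ 0 := by omega
  set ζ := Complex.exp (2 * Real.pi * Complex.I / N)
  have hζ : IsPrimitiveRoot ζ N := Complex.isPrimitiveRoot_exp N hN
  have hnorm (j : ℕ) : ‖ζ ^ j‖ = 1 := by rw [norm_pow, hζ.norm'_eq_one hN, one_pow]
  set w : ℕ → ℝ := fun j => fejerKernel k (ζ ^ j) / N
  have hw_nonneg (j : ℕ) (_ : j ∈ range N) : 0 ≤ w j :=
    div_nonneg (fejerKernel_nonneg k _) N.cast_nonneg
  have hw_sum : ∑ j ∈ range N, w j = 1 := by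
    have h := sum_fejerKernel_mul_zpow hζ (k := k) (n := 0) (by rw [abs_zero, zero_add]; omega)
    simp only [zpow_zero, mul_one, fejerCoeff_of_abs_le (abs_zero.trans_le k.cast_nonneg),
      abs_zero, Int.cast_zero, zero_div, sub_zero] at h
    exact_mod_cast h
  have hrepr : fejerMean hcoord e k x = ∑ j ∈ range N, w j • Ψ (ζ ^ j) x := by
    refine hι (funext fun n => ?_)
    simp only [coord_fejerMean_apply hcoord he, map_sum, Finset.sum_apply, ← Complex.coe_smul,
      map_smul, Pi.smul_apply, smul_eq_mul, hΨ _ (hnorm _)]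
    by_cases hn : B < |n|
    · simp [hB n hn]
    · rw [← sum_fejerKernel_mul_zpow hζ (n := n) (by omega), sum_mul]
      exact sum_congr rfl fun j _ => by ring
  have hmem := (convex_closedBall (0 : E) (C * ‖x‖)).sum_mem hw_nonneg hw_sum
    fun j _ => mem_closedBall_zero_iff.mpr (hC _ (hnorm j) x)
  rwa [← hrepr, mem_closedBall_zero_iff] at hmem

end SequenceSpace

theorem stmt8_general
    {E : Type*} [NormedAddCommGroup E] [NormedSpace ℂ E]
    (ι : E →ₗ[ℂ] (ℤ → ℂ)) (hι : Function.Injective ι)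
    (e : ℤ → E) (he : ∀ k : ℤ, ι (e k) = Pi.single k 1)
    (hdense : Dense (Submodule.span ℂ (Set.range e) : Set E))
    (hcoord : ∀ n : ℤ, Continuous fun x : E => ι x n)
    (Ψ : ℂ → E → E)
    (hΨ : ∀ z : ℂ, ‖z‖ = 1 → ∀ x : E, ∀ n : ℤ, ι (Ψ z x) n = ι x n * z ^ n)
    (hΨbdd : ∃ C : ℝ, ∀ z : ℂ, ‖z‖ = 1 → ∀ x : E, ‖Ψ z x‖ ≤ C * ‖x‖) :
    ∀ x : E,
      Tendsto (fun k : ℕ =>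
          ‖(∑ n ∈ Finset.Icc (-(k : ℤ)) (k : ℤ),
              (((((1 : ℝ) - ((|n| : ℤ) : ℝ) / ((k : ℝ) + 1)) : ℝ) : ℂ) * ι x n) • e n) - x‖)
        atTop (nhds 0) := by
  obtain ⟨C, hC⟩ := hΨbdd
  have hbound (k : ℕ) (x : E) : ‖fejerMean hcoord e k x‖ ≤ C * ‖x‖ :=
    hdense.induction (fun y hy => norm_fejerMean_apply_le_of_mem_span hcoord hι he hΨ hC k hy)
      (isClosed_le (fejerMean hcoord e k).continuous.norm (continuous_const.mul continuous_norm)) x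
  have hbasis : ∀ y ∈ Set.range e,
      Tendsto (fejerMean hcoord e · y) atTop (𝓝 (ContinuousLinearMap.id ℂ E y)) := by
    rintro _ ⟨m, rfl⟩
    simpa [fejerMean_apply_basis hcoord he] using
      ((Complex.continuous_ofReal.tendsto 1).comp (tendsto_fejerCoeff m)).smul_const (e m)
  intro x
  have hx := ContinuousLinearMap.tendsto_apply_of_dense_span (fejerMean hcoord e) (.id ℂ E)
    hbound hdense hbasis x
  simpa only [fejerMean_apply, ContinuousLinearMap.id_apply] using
    tendsto_iff_norm_sub_tendsto_zero.mp hx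

/-- For every `x ∈ E`, the Fejér (Cesàro) means of the partial sums converge to `x`
in `E`:
`lim_{k→∞} ‖ Σ_{n=−k}^{k} (1 − |n|/(k+1)) x(n) e_n − x ‖ = 0`. -/
theorem stmt8
    {E : Type*} [NormedAddCommGroup E] [NormedSpace ℂ E] [CompleteSpace E]
    (ι : E →ₗ[ℂ] (ℤ → ℂ)) (hι : Function.Injective ι)
    (e : ℤ → E) (he : ∀ k : ℤ, ι (e k) = Pi.single k 1)
    (hdense : Dense (Submodule.span ℂ (Set.range e) : Set E))
    (hcoord : ∀ n : ℤ, Continuous fun x : E => ι x n)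
    (Ψ : ℂ → E → E)
    (hΨ : ∀ z : ℂ, ‖z‖ = 1 → ∀ x : E, ∀ n : ℤ, ι (Ψ z x) n = ι x n * z ^ n)
    (hΨbdd : ∃ C : ℝ, ∀ z : ℂ, ‖z‖ = 1 → ∀ x : E, ‖Ψ z x‖ ≤ C * ‖x‖) :
    ∀ x : E,
      Tendsto (fun k : ℕ =>
          ‖(∑ n ∈ Finset.Icc (-(k : ℤ)) (k : ℤ),
              (((((1 : ℝ) - ((|n| : ℤ) : ℝ) / ((k : ℝ) + 1)) : ℝ) : ℂ) * ι x n) • e n) - x‖)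
        atTop (nhds 0) :=
  stmt8_general ι hι e he hdense hcoord Ψ hΨ hΨbdd
end

section
/- Assume 𝐒 is not bounded but 𝐒₋₁ is bounded on 𝐄. Let φ ∈ ℂ^ℤ be finitely supported with φ(n) = 0 for all n > 0. Then the operator T_φ : x ↦ P⁺(φ∗x) maps 𝐄 boundedly into 𝐄, and |φ̃(z)| ≤ ‖T_φ‖ for every z ∈ ℂ with |z| ≥ 1/ρ(𝐒₋₁), where φ̃(z) = Σ_n φ(n) zⁿ (a finite sum) and ‖T_φ‖ is the operator norm of T_φ. -/
/-!
`T_φ` is `p(𝐒₋₁)` for the polynomial `p(X) = ∑ φ(j) X^(-j)`, and `φ̃(z) = p(1/z)`. The diagonal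
operators `x ↦ (cⁿ x(n))` with `|c| = 1` conjugate `𝐒₋₁` to `c • 𝐒₋₁`, so the spectrum of `𝐒₋₁`
is rotation invariant and hence contains the whole circle of radius `ρ(𝐒₋₁)`. By the spectral
mapping theorem `p` sends this circle into the spectrum of `T_φ`, so `|p| ≤ ‖T_φ‖` on it, and the
maximum modulus principle extends the bound to the closed disc, which contains `1/z`.
-/

open scoped ENNReal

open Polynomial

section RotationInvariantSpectrum

variable {A : Type*} [NormedRing A] [NormedAlgebra ℂ A] [CompleteSpace A] [NormOneClass A]
  {a : A}

theorem spectralRadius_ne_top (a : A) : spectralRadius ℂ a ≠ ⊤ :=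
  ne_top_of_le_ne_top ENNReal.coe_ne_top (spectrum.spectralRadius_le_nnnorm a)

theorem sphere_spectralRadius_subset_spectrum
    (hrot : ∀ c : ℂ, ‖c‖ = 1 → spectrum ℂ (c • a) = spectrum ℂ a) :
    Metric.sphere 0 (spectralRadius ℂ a).toReal ⊆ spectrum ℂ a := by
  have := NormOneClass.nontrivial (G := A)
  obtain ⟨μ, hμ, hμρ⟩ := spectrum.exists_nnnorm_eq_spectralRadius a
  intro v hv
  rw [mem_sphere_zero_iff_norm, ← hμρ, ENNReal.coe_toReal, coe_nnnorm] at hv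
  rcases eq_or_ne μ 0 with rfl | hμ0
  · rwa [norm_eq_zero.mp (hv.trans norm_zero)]
  have hc : ‖v / μ‖ = 1 := by rw [norm_div, hv, div_self (norm_ne_zero_iff.mpr hμ0)]
  have hc0 : v / μ ≠ 0 := norm_ne_zero_iff.mp (hc ▸ one_ne_zero)
  have := spectrum.smul_mem_smul_iff (r := Units.mk0 (v / μ) hc0) |>.mpr hμ
  rwa [Units.smul_mk0, Units.smul_mk0, hrot _ hc, smul_eq_mul, div_mul_cancel₀ _ hμ0] at this

theorem norm_eval_le_norm_aeval_of_smul_invariant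
    (hrot : ∀ c : ℂ, ‖c‖ = 1 → spectrum ℂ (c • a) = spectrum ℂ a) (p : ℂ[X]) {w : ℂ}
    (hw : (‖w‖₊ : ℝ≥0∞) ≤ spectralRadius ℂ a) : ‖p.eval w‖ ≤ ‖aeval a p‖ := by
  set R := (spectralRadius ℂ a).toReal
  have hsphere : ∀ v ∈ Metric.sphere (0 : ℂ) R, ‖p.eval v‖ ≤ ‖aeval a p‖ := fun v hv =>
    spectrum.norm_le_norm_of_mem <|
      spectrum.subset_polynomial_aeval a p ⟨v, sphere_spectralRadius_subset_spectrum hrot hv, rfl⟩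
  have hwR : ‖w‖ ≤ R := by
    simpa using ENNReal.toReal_mono (spectralRadius_ne_top a) hw
  rcases hwR.eq_or_lt with hwR | hwR
  · exact hsphere w (mem_sphere_zero_iff_norm.mpr hwR)
  have hR : R ≠ 0 := (norm_nonneg w |>.trans_lt hwR).ne'
  refine Complex.norm_le_of_forall_mem_frontier_norm_le Metric.isBounded_ball
    p.differentiable.diffContOnCl ?_ (subset_closure (mem_ball_zero_iff.mpr hwR))
  rwa [frontier_ball _ hR]

end RotationInvariantSpectrum

section ReflectedSymbol

variable {R : Type*}

noncomputable def reflectedSymbol [CommSemiring R] (φ : ℤ →₀ R) : R[X] :=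
  ∑ j ∈ φ.support, C (φ j) * X ^ (-j).toNat

theorem eval_inv_reflectedSymbol [Field R] {φ : ℤ →₀ R} (hφ : ∀ n : ℤ, 0 < n → φ n = 0)
    (z : R) : (reflectedSymbol φ).eval z⁻¹ = ∑ j ∈ φ.support, φ j * z ^ j := by
  rw [reflectedSymbol, eval_finsetSum]
  refine Finset.sum_congr rfl fun j hj => ?_
  have hj : j ≤ 0 := not_lt.mp fun h => Finsupp.mem_support_iff.mp hj (hφ j h)
  rw [eval_mul, eval_C, eval_pow, eval_X, inv_pow, ← zpow_natCast, ← zpow_neg,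
    Int.toNat_of_nonneg (by omega), neg_neg]

end ReflectedSymbol

section SequenceSpace

variable {E : Type*} [NormedAddCommGroup E] [NormedSpace ℂ E] (ι : E →ₗ[ℂ] (ℕ → ℂ))

theorem exists_eq_clm_of_coord_eq_mul (hι : Function.Injective ι) {Γ : E → E} (c : ℕ → ℂ)
    (hΓ : ∀ x n, ι (Γ x) n = c n * ι x n) (hbdd : ∃ C, ∀ x, ‖Γ x‖ ≤ C * ‖x‖) :
    ∃ G : E →L[ℂ] E, ⇑G = Γ := by
  let G : E →ₗ[ℂ] E :=
    { toFun := Γ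
      map_add' := fun x y => hι <| funext fun n => by simp only [map_add, Pi.add_apply, hΓ, mul_add]
      map_smul' := fun a x => hι <| funext fun n => by
        simp only [map_smul, Pi.smul_apply, hΓ, smul_eq_mul, RingHom.id_apply]; ring }
  exact ⟨G.mkContinuousOfExistsBound hbdd, rfl⟩

variable {M : E →L[ℂ] E}

theorem coord_pow_apply_of_shift (hM : ∀ x n, ι (M x) n = ι x (n + 1)) (k : ℕ) (x : E)
    (m : ℕ) : ι ((M ^ k) x) m = ι x (m + k) := by
  induction k generalizing x m with
  | zero => simp
  | succ k ih => rw [pow_succ, mul_apply_eq_comp, ih, hM, Nat.add_assoc]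

theorem coord_aeval_reflectedSymbol (hM : ∀ x n, ι (M x) n = ι x (n + 1)) {φ : ℤ →₀ ℂ}
    (hφ : ∀ n : ℤ, 0 < n → φ n = 0) (x : E) (m : ℕ) : ι (aeval M (reflectedSymbol φ) x) m =
      ∑ j ∈ φ.support, φ j * (if 0 ≤ (m : ℤ) - j then ι x ((m : ℤ) - j).toNat else 0) := by
  simp only [reflectedSymbol, map_sum, map_mul, aeval_C, map_pow, aeval_X, ← Algebra.smul_def,
    sum_apply, smul_apply, map_smul, Finset.sum_apply, Pi.smul_apply, smul_eq_mul,
    coord_pow_apply_of_shift ι hM]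
  refine Finset.sum_congr rfl fun j hj => ?_
  have hj : j ≤ 0 := not_lt.mp fun h => Finsupp.mem_support_iff.mp hj (hφ j h)
  rw [if_pos (by omega), show ((m : ℤ) - j).toNat = m + (-j).toNat by omega]

theorem spectrum_smul_eq_of_shift (hι : Function.Injective ι)
    (hM : ∀ x n, ι (M x) n = ι x (n + 1))
    (hdiag : ∀ c : ℂ, ‖c‖ = 1 → ∃ G : E →L[ℂ] E, ∀ x n, ι (G x) n = c ^ n * ι x n)
    {c : ℂ} (hc : ‖c‖ = 1) : spectrum ℂ (c • M) = spectrum ℂ M := by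
  have hc0 : c ≠ 0 := norm_ne_zero_iff.mp (hc ▸ one_ne_zero)
  obtain ⟨G, hG⟩ := hdiag c hc
  obtain ⟨H, hH⟩ := hdiag c⁻¹ (by rw [norm_inv, hc, inv_one])
  have ext_coord : ∀ {S T : E →L[ℂ] E}, (∀ x n, ι (S x) n = ι (T x) n) → S = T :=
    fun h => ContinuousLinearMap.ext fun x => hι (funext (h x))
  have hHG : H * G = 1 := ext_coord fun x n => by simp [hG, hH, hc0]
  have hGH : G * H = 1 := ext_coord fun x n => by simp [hG, hH, hc0]
  let u : (E →L[ℂ] E)ˣ := ⟨H, G, hHG, hGH⟩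
  have hconj : (u : E →L[ℂ] E) * M * ↑u⁻¹ = c • M := ext_coord fun x n => by
    simp only [u, Units.inv_mk, mul_apply_eq_comp, smul_apply, map_smul, Pi.smul_apply,
      smul_eq_mul, hG, hH, hM, inv_pow, pow_succ]
    field_simp
  rw [← hconj, spectrum.units_conjugate]

end SequenceSpace

theorem stmt18_general
    {E : Type*} [NormedAddCommGroup E] [NormedSpace ℂ E] [CompleteSpace E]
    (ι : E →ₗ[ℂ] (ℕ → ℂ)) (hι : Function.Injective ι)
    (Γ : ℂ → E → E)
    (hΓ : ∀ z : ℂ, ‖z‖ = 1 → ∀ x : E, ∀ n : ℕ, ι (Γ z x) n = z ^ n * ι x n)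
    (hΓbdd : ∃ C : ℝ, ∀ z : ℂ, ‖z‖ = 1 → ∀ x : E, ‖Γ z x‖ ≤ C * ‖x‖)
    -- `𝐒₋₁` is bounded, with restriction `Mop` to `𝐄`:
    (Mop : E →L[ℂ] E)
    (hMop : ∀ x : E, ∀ n : ℕ, ι (Mop x) n = ι x (n + 1))
    (φ : ℤ →₀ ℂ) (hφ : ∀ n : ℤ, 0 < n → φ n = 0) :
    ∃ Tφ : E →L[ℂ] E,
      (∀ x : E, ∀ m : ℕ, ι (Tφ x) m =
        ∑ j ∈ φ.support, φ j * (if 0 ≤ (m : ℤ) - j then ι x ((m : ℤ) - j).toNat else 0)) ∧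
      ∀ z : ℂ, (spectralRadius ℂ Mop)⁻¹ ≤ (‖z‖₊ : ℝ≥0∞) →
        ‖∑ j ∈ φ.support, φ j * z ^ j‖ ≤ ‖Tφ‖ := by
  refine ⟨aeval Mop (reflectedSymbol φ), coord_aeval_reflectedSymbol ι hMop hφ, fun z hz => ?_⟩
  have : Nontrivial E := by
    by_contra h
    have : Subsingleton E := not_nontrivial_iff_subsingleton.mp h
    simp [spectralRadius, spectrum.of_subsingleton] at hz
  have hz' : (‖z⁻¹‖₊ : ℝ≥0∞) ≤ spectralRadius ℂ Mop := by
    have h := ENNReal.inv_le_iff_inv_le.mp hz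
    rcases eq_or_ne z 0 with rfl | hz0
    · simp [spectralRadius_ne_top Mop] at h
    · rwa [nnnorm_inv, ENNReal.coe_inv (nnnorm_ne_zero_iff.mpr hz0)]
  obtain ⟨C, hC⟩ := hΓbdd
  have hdiag : ∀ c : ℂ, ‖c‖ = 1 → ∃ G : E →L[ℂ] E, ∀ x n, ι (G x) n = c ^ n * ι x n :=
    fun c hc => by
      obtain ⟨G, hG⟩ := exists_eq_clm_of_coord_eq_mul ι hι _ (hΓ c hc) ⟨C, hC c hc⟩
      exact ⟨G, by simpa only [hG] using hΓ c hc⟩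
  have hrot : ∀ c : ℂ, ‖c‖ = 1 → spectrum ℂ (c • Mop) = spectrum ℂ Mop :=
    fun c hc => spectrum_smul_eq_of_shift ι hι hMop hdiag hc
  rw [← eval_inv_reflectedSymbol hφ]
  exact norm_eval_le_norm_aeval_of_smul_invariant hrot _ hz'

/-- If `𝐒` is not bounded but `𝐒₋₁` is bounded on `𝐄`, then for every finitely
supported `φ : ℤ → ℂ` with `φ(n) = 0` for `n > 0`, the operator `T_φ : x ↦ P⁺(φ∗x)`
maps `𝐄` boundedly into `𝐄`, and `|φ̃(z)| ≤ ‖T_φ‖` for every `z` with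
`|z| ≥ 1/ρ(𝐒₋₁)`. -/
theorem stmt18
    {E : Type*} [NormedAddCommGroup E] [NormedSpace ℂ E] [CompleteSpace E]
    (ι : E →ₗ[ℂ] (ℕ → ℂ)) (hι : Function.Injective ι)
    (e : ℕ → E) (he : ∀ k : ℕ, ι (e k) = Pi.single k 1)
    (hdense : Dense (Submodule.span ℂ (Set.range e) : Set E))
    (hcoord : ∀ n : ℕ, Continuous fun x : E => ι x n)
    (Γ : ℂ → E → E)
    (hΓ : ∀ z : ℂ, ‖z‖ = 1 → ∀ x : E, ∀ n : ℕ, ι (Γ z x) n = z ^ n * ι x n)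
    (hΓbdd : ∃ C : ℝ, ∀ z : ℂ, ‖z‖ = 1 → ∀ x : E, ‖Γ z x‖ ≤ C * ‖x‖)
    -- `𝐒` is not bounded:
    (hSnb : ¬ ∀ x : E, ∃ y : E, ι y 0 = 0 ∧ ∀ n : ℕ, ι y (n + 1) = ι x n)
    -- `𝐒₋₁` is bounded, with restriction `Mop` to `𝐄`:
    (Mop : E →L[ℂ] E)
    (hMop : ∀ x : E, ∀ n : ℕ, ι (Mop x) n = ι x (n + 1))
    (φ : ℤ →₀ ℂ) (hφ : ∀ n : ℤ, 0 < n → φ n = 0) :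
    ∃ Tφ : E →L[ℂ] E,
      (∀ x : E, ∀ m : ℕ, ι (Tφ x) m =
        ∑ j ∈ φ.support, φ j * (if 0 ≤ (m : ℤ) - j then ι x ((m : ℤ) - j).toNat else 0)) ∧
      ∀ z : ℂ, (spectralRadius ℂ Mop)⁻¹ ≤ (‖z‖₊ : ℝ≥0∞) →
        ‖∑ j ∈ φ.support, φ j * z ^ j‖ ≤ ‖Tφ‖ :=
  stmt18_general ι hι Γ hΓ hΓbdd Mop hMop φ hφ
end
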